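/- Let t ≥ 2, q ≥ 1, d ≥ 1 be integers and let z_1,…,z_q be real numbers (not necessarily distinct) such that (1/q) ∑_{i=1}^q z_i^k = a_k for every k = 0,1,…,t, where a_k = π^{−1/2} ∫_ℝ ω^k e^{−ω²} dω is the k-th Gaussian moment. Let r_1,…,r_N ∈ {1,…,q}^d be the rows of an orthogonal array of strength t: for every t distinct coordinate indices i_1,…,i_t and every (v_1,…,v_t) ∈ {1,…,q}^t, exactly N/q^t of the rows r_j satisfy r_j(i_s) = v_s for all s. Then for every real polynomial f in d variables of total degree at most t, (1/N) ∑_{j=1}^N f(z_{r_j(1)},…,z_{r_j(d)}) = ∫_{ℝ^d} f dγ_d; that is, the N points (z_{r_j(1)},…,z_{r_j(d)}), counted with multiplicity and with equal weights 1/N, form a Gaussian t-design in ℝ^d. -/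

import Mathlib

/-!
Both sides are linear in `f`, so it suffices to treat monomials `∏ i, x i ^ m i` with
`∑ i, m i ≤ t`. Such a monomial involves at most `t` coordinates, and on any `t` columns an
orthogonal array of strength `t` runs through every tuple of symbols equally often; hence the
average of the monomial over the rows factors as `∏ i, (1/q) ∑ᵤ z u ^ m i`. By the moment
hypothesis this is `∏ i, a (m i)`, which is also the Gaussian integral of the monomial since
the Gaussian density is a product of one-dimensional ones.
-/

open Real MeasureTheory Finset Set

noncomputable section

def gaussianMoment (k : ℕ) : ℝ :=
  π ^ (-(1 : ℝ) / 2) * ∫ ω : ℝ, ω ^ k * exp (-ω ^ 2)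

lemma integrable_pow_mul_exp_neg_sq (k : ℕ) : Integrable fun x : ℝ => x ^ k * exp (-x ^ 2) := by
  have hIoi : IntegrableOn (fun x : ℝ => x ^ k * exp (-x ^ 2)) (Ioi 0) := by
    simpa using integrableOn_rpow_mul_exp_neg_mul_sq one_pos
      (neg_one_lt_zero.trans_le k.cast_nonneg : (-1 : ℝ) < k)
  -- the integrand is even or odd, so on `Iio 0` it is `(-1) ^ k` times its reflection
  have hIio : IntegrableOn (fun x : ℝ => x ^ k * exp (-x ^ 2)) (Iio 0) := by
    have := IntegrableOn.comp_neg_Iio (c := 0)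
      (f := fun x : ℝ => (-1) ^ k * (x ^ k * exp (-x ^ 2)))
      (by rw [neg_zero]; exact hIoi.const_mul _)
    simp only [neg_sq] at this
    refine this.congr_fun (fun x _ => ?_) measurableSet_Iio
    simp only [← mul_assoc, ← mul_pow, neg_one_mul, neg_neg]
  rw [← integrableOn_univ, ← Iio_union_Ici (a := (0 : ℝ)), integrableOn_union,
    integrableOn_Ici_iff_integrableOn_Ioi]
  exact ⟨hIio, hIoi⟩

lemma integral_pow_mul_gaussian (k : ℕ) :
    ∫ ω : ℝ, ω ^ k * (π ^ (-(1 : ℝ) / 2) * exp (-ω ^ 2)) = gaussianMoment k := by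
  rw [gaussianMoment, ← integral_const_mul]
  congr 1 with ω
  ring

lemma integrable_pow_mul_gaussian (k : ℕ) :
    Integrable fun ω : ℝ => ω ^ k * (π ^ (-(1 : ℝ) / 2) * exp (-ω ^ 2)) := by
  simpa only [mul_left_comm] using (integrable_pow_mul_exp_neg_sq k).const_mul (π ^ (-(1 : ℝ) / 2))

lemma gaussian_density_eq_prod {ι : Type*} [Fintype ι] (x : ι → ℝ) :
    π ^ (-(Fintype.card ι : ℝ) / 2) * exp (-∑ i, x i ^ 2)
      = ∏ i, π ^ (-(1 : ℝ) / 2) * exp (-x i ^ 2) := by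
  rw [prod_mul_distrib, prod_const, card_univ, ← exp_sum, sum_neg_distrib,
    ← rpow_natCast, ← rpow_mul pi_pos.le]
  congr 2
  ring

lemma integral_monomial_mul_gaussian {ι : Type*} [Fintype ι] (m : ι → ℕ) :
    ∫ x : ι → ℝ, (∏ i, x i ^ m i) * (π ^ (-(Fintype.card ι : ℝ) / 2) * exp (-∑ i, x i ^ 2))
      = ∏ i, gaussianMoment (m i) := by
  simp_rw [gaussian_density_eq_prod, ← prod_mul_distrib]
  rw [integral_fintype_prod_volume_eq_prod
    (f := fun i ω => ω ^ m i * (π ^ (-(1 : ℝ) / 2) * exp (-ω ^ 2)))]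
  exact prod_congr rfl fun i _ => integral_pow_mul_gaussian (m i)

lemma integral_eval_mul_gaussian {ι : Type*} [Fintype ι] (p : MvPolynomial ι ℝ) :
    ∫ x : ι → ℝ, MvPolynomial.eval x p * (π ^ (-(Fintype.card ι : ℝ) / 2) * exp (-∑ i, x i ^ 2))
      = ∑ m ∈ p.support, MvPolynomial.coeff m p * ∏ i, gaussianMoment (m i) := by
  have hint (m : ι →₀ ℕ) : Integrable fun x : ι → ℝ =>
      (∏ i, x i ^ m i) * (π ^ (-(Fintype.card ι : ℝ) / 2) * exp (-∑ i, x i ^ 2)) := by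
    simp_rw [gaussian_density_eq_prod, ← prod_mul_distrib]
    exact Integrable.fintype_prod (f := fun i ω => ω ^ m i * (π ^ (-(1 : ℝ) / 2) * exp (-ω ^ 2)))
      fun i => integrable_pow_mul_gaussian (m i)
  simp_rw [MvPolynomial.eval_eq', sum_mul, mul_assoc]
  rw [integral_finsetSum _ fun m _ => (hint m).const_mul _]
  refine sum_congr rfl fun m _ => ?_
  rw [integral_const_mul, integral_monomial_mul_gaussian]

lemma Finsupp.card_support_le_degree {α : Type*} (m : α →₀ ℕ) : #m.support ≤ m.degree := by
  calc #m.support = ∑ i ∈ m.support, 1 := card_eq_sum_ones _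
    _ ≤ ∑ i ∈ m.support, m i :=
        Finset.sum_le_sum fun i hi => Nat.one_le_iff_ne_zero.mpr (Finsupp.mem_support_iff.mp hi)

lemma exists_embedding_fin_superset {α : Type*} [Fintype α] {t : ℕ} (s : Finset α)
    (hs : #s ≤ t) (ht : t ≤ Fintype.card α) : ∃ e : Fin t ↪ α, ↑s ⊆ Set.range e := by
  obtain ⟨u, hsu, -, hu⟩ := exists_subsuperset_card_eq (subset_univ s) hs (by simpa using ht)
  let E := u.equivFinOfCardEq hu
  exact ⟨E.symm.toEmbedding.trans (Function.Embedding.subtype _),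
    fun x hx => ⟨E ⟨x, hsu hx⟩, by simp⟩⟩

def IsOrthogonalArray {N d q : ℕ} (t : ℕ) (r : Fin N → Fin d → Fin q) : Prop :=
  ∀ (i : Fin t ↪ Fin d) (v : Fin t → Fin q),
    (univ.filter fun j : Fin N => ∀ s, r j (i s) = v s).card * q ^ t = N

namespace IsOrthogonalArray

variable {N d q t : ℕ} {r : Fin N → Fin d → Fin q}

lemma sum_comp_embedding {R : Type*} [CommSemiring R] (hr : IsOrthogonalArray t r)
    (e : Fin t ↪ Fin d) (g : (Fin t → Fin q) → R) :
    (∑ j, g fun s => r j (e s)) * q ^ t = N * ∑ v, g v := by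
  rw [← sum_fiberwise univ (fun j s => r j (e s)), sum_mul, mul_sum]
  refine sum_congr rfl fun v _ => ?_
  have hfiber : (univ.filter fun j : Fin N => (fun s => r j (e s)) = v)
      = univ.filter fun j : Fin N => ∀ s, r j (e s) = v s := by
    simp only [funext_iff]
  rw [sum_congr rfl fun j hj => congrArg g (mem_filter.mp hj).2, sum_const, nsmul_eq_mul,
    hfiber, mul_right_comm, ← Nat.cast_pow, ← Nat.cast_mul, hr e v]

lemma average_prod {R : Type*} [Field R] [CharZero R] (hr : IsOrthogonalArray t r)
    (hq : 0 < q) (hN : 0 < N) (e : Fin t ↪ Fin d) (h : Fin d → Fin q → R)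
    (h1 : ∀ i ∉ Set.range e, ∀ u, h i u = 1) :
    (N : R)⁻¹ * ∑ j, ∏ i, h i (r j i) = ∏ i, (q : R)⁻¹ * ∑ u, h i u := by
  have hq' : (q : R) ≠ 0 := by exact_mod_cast hq.ne'
  have hN' : (N : R) ≠ 0 := by exact_mod_cast hN.ne'
  have hrow (j : Fin N) : ∏ i, h i (r j i) = ∏ s, h (e s) (r j (e s)) :=
    (Fintype.prod_of_injective e e.injective _ _ (fun i hi => h1 i hi _) fun _ => rfl).symm
  have hcol : ∏ i, (q : R)⁻¹ * ∑ u, h i u = ∏ s, (q : R)⁻¹ * ∑ u, h (e s) u :=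
    (Fintype.prod_of_injective e e.injective _ _
      (fun i hi => by simp [h1 i hi, hq']) fun _ => rfl).symm
  have hsum := hr.sum_comp_embedding e fun v => ∏ s, h (e s) (v s)
  rw [← Fintype.prod_sum] at hsum
  beta_reduce at hsum
  simp only [hrow, hcol, prod_mul_distrib, prod_const, card_univ, Fintype.card_fin]
  rw [inv_pow, ← div_eq_inv_mul, ← div_eq_inv_mul, div_eq_div_iff hN' (pow_ne_zero t hq')]
  linear_combination hsum

lemma average_monomial {R : Type*} [Field R] [CharZero R] (hr : IsOrthogonalArray t r)
    (hq : 0 < q) (hN : 0 < N) (htd : t ≤ d) (z : Fin q → R) (m : Fin d →₀ ℕ)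
    (hm : m.degree ≤ t) :
    (N : R)⁻¹ * ∑ j, ∏ i, z (r j i) ^ m i = ∏ i, (q : R)⁻¹ * ∑ u, z u ^ m i := by
  obtain ⟨e, he⟩ := exists_embedding_fin_superset m.support
    (m.card_support_le_degree.trans hm) (by simpa using htd)
  refine hr.average_prod hq hN e (fun i u => z u ^ m i) fun i hi u => ?_
  rw [Finsupp.notMem_support_iff.mp fun hmi => hi (he hmi), pow_zero]

end IsOrthogonalArray

end

theorem stmt15_general (t q d N : ℕ) (hq : 0 < q) (htd : t ≤ d)
    (hN : 0 < N) (z : Fin q → ℝ)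
    (hz : ∀ k ≤ t, (1 / (q : ℝ)) * ∑ i, z i ^ k
      = Real.pi ^ (-(1 : ℝ) / 2) * ∫ ω : ℝ, ω ^ k * Real.exp (-ω ^ 2))
    (r : Fin N → Fin d → Fin q)
    (hOA : ∀ (i : Fin t ↪ Fin d) (v : Fin t → Fin q),
      (Finset.univ.filter fun j : Fin N => ∀ s, r j (i s) = v s).card * q ^ t = N)
    (f : MvPolynomial (Fin d) ℝ) (hf : f.totalDegree ≤ t) :
    (1 / (N : ℝ)) * ∑ j, MvPolynomial.eval (fun i => z (r j i)) f
      = ∫ x : Fin d → ℝ, MvPolynomial.eval x f *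
          (Real.pi ^ (-(d : ℝ) / 2) * Real.exp (-∑ i, x i ^ 2)) := by
  have hmoment (m) (hm : m ∈ f.support) :
      (N : ℝ)⁻¹ * ∑ j, ∏ i, z (r j i) ^ m i = ∏ i, gaussianMoment (m i) := by
    rw [IsOrthogonalArray.average_monomial hOA hq hN htd z m
      ((MvPolynomial.le_totalDegree hm).trans hf)]
    refine prod_congr rfl fun i _ => ?_
    have hmi : m i ≤ t := (MvPolynomial.le_degreeOf_of_mem_support i hm).trans
      ((f.degreeOf_le_totalDegree i).trans hf)
    rw [gaussianMoment, ← hz (m i) hmi, one_div]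
  calc (1 / (N : ℝ)) * ∑ j, MvPolynomial.eval (fun i => z (r j i)) f
      = ∑ m ∈ f.support, MvPolynomial.coeff m f * ((N : ℝ)⁻¹ * ∑ j, ∏ i, z (r j i) ^ m i) := by
        simp only [MvPolynomial.eval_eq', mul_sum]
        rw [sum_comm]
        exact sum_congr rfl fun m _ => sum_congr rfl fun j _ => by ring
    _ = ∑ m ∈ f.support, MvPolynomial.coeff m f * ∏ i, gaussianMoment (m i) :=
        sum_congr rfl fun m hm => by rw [hmoment m hm]
    _ = _ := by simpa using (integral_eval_mul_gaussian f).symm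

theorem stmt15 (t q d N : ℕ) (ht : 2 ≤ t) (hq : 0 < q) (hd : 0 < d) (htd : t ≤ d)
    (hN : 0 < N) (z : Fin q → ℝ)
    (hz : ∀ k ≤ t, (1 / (q : ℝ)) * ∑ i, z i ^ k
      = Real.pi ^ (-(1 : ℝ) / 2) * ∫ ω : ℝ, ω ^ k * Real.exp (-ω ^ 2))
    (r : Fin N → Fin d → Fin q)
    (hOA : ∀ (i : Fin t ↪ Fin d) (v : Fin t → Fin q),
      (Finset.univ.filter fun j : Fin N => ∀ s, r j (i s) = v s).card * q ^ t = N)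
    (f : MvPolynomial (Fin d) ℝ) (hf : f.totalDegree ≤ t) :
    (1 / (N : ℝ)) * ∑ j, MvPolynomial.eval (fun i => z (r j i)) f
      = ∫ x : Fin d → ℝ, MvPolynomial.eval x f *
          (Real.pi ^ (-(d : ℝ) / 2) * Real.exp (-∑ i, x i ^ 2)) :=
  stmt15_general t q d N hq htd hN z hz r hOA f hf
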